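/- arXiv:1501.00323 — 5 statements merged into one kernel-verified Lean document; each statement's English description precedes it below -/
import Mathlib

section
/- If u ∈ Ḣ¹(ℝ^d) satisfies ‖∇u‖_{L²} < ‖∇W‖_{L²}, then ∫_{ℝ^d} |u|^{2*} dx ≤ ∫_{ℝ^d} |∇u|² dx. -/
open Real MeasureTheory

/-- if `‖∇u‖_{L²} < ‖∇W‖_{L²}` then `∫ |u|^{2*} ≤ ∫ |∇u|²`,
given the Sobolev inequality with best constant `C` and the normalization
`C^{2*} ‖∇W‖_{L²}^{2*-2} = 1`. -/
theorem stmt_2 (d : ℕ) (hd : 3 ≤ d) (hd' : d ≤ 5)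
    (W u : EuclideanSpace ℝ (Fin d) → ℝ)
    (hW : ∀ x, W x =
      (1 + ‖x‖ ^ 2 / ((d : ℝ) * ((d : ℝ) - 2))) ^ (-(((d : ℝ) - 2) / 2)))
    (C : ℝ) (hC : 0 < C)
    -- the Sobolev inequality for `u`:
    (hSob : (∫ x, |u x| ^ ((2 * (d : ℝ)) / ((d : ℝ) - 2))) ^ (((d : ℝ) - 2) / (2 * (d : ℝ)))
        ≤ C * (∫ x, ‖gradient u x‖ ^ 2) ^ ((1 : ℝ) / 2))
    -- the normalization of the best constant:
    (hCW : C ^ ((2 * (d : ℝ)) / ((d : ℝ) - 2))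
        * (∫ x, ‖gradient W x‖ ^ 2) ^ ((((2 * (d : ℝ)) / ((d : ℝ) - 2)) - 2) / 2) = 1)
    -- `‖∇u‖_{L²} < ‖∇W‖_{L²}`:
    (hless : (∫ x, ‖gradient u x‖ ^ 2) ^ ((1 : ℝ) / 2)
        < (∫ x, ‖gradient W x‖ ^ 2) ^ ((1 : ℝ) / 2)) :
    ∫ x, |u x| ^ ((2 * (d : ℝ)) / ((d : ℝ) - 2)) ≤ ∫ x, ‖gradient u x‖ ^ 2 := by
  set p : ℝ := (2 * (d : ℝ)) / ((d : ℝ) - 2) with hpdef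
  set A : ℝ := ∫ x, |u x| ^ p with hA
  set G : ℝ := ∫ x, ‖gradient u x‖ ^ 2 with hG
  set GW : ℝ := ∫ x, ‖gradient W x‖ ^ 2 with hGW
  have hdR : (3 : ℝ) ≤ (d : ℝ) := by exact_mod_cast hd
  have hd2 : (0 : ℝ) < (d : ℝ) - 2 := by linarith
  have hp0 : 0 < p := by positivity
  have hp2 : 2 < p := by
    rw [hpdef, lt_div_iff₀ hd2]; nlinarith
  have hA0 : 0 ≤ A := integral_nonneg fun x => rpow_nonneg (abs_nonneg _) _
  have hG0 : 0 ≤ G := integral_nonneg fun x => sq_nonneg _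
  have hGW0 : 0 ≤ GW := integral_nonneg fun x => sq_nonneg _
  have hinv : (((d : ℝ) - 2) / (2 * (d : ℝ))) = 1 / p := by
    rw [hpdef, one_div_div]
  rw [hinv] at hSob
  rcases eq_or_lt_of_le hG0 with hGz | hGpos
  · -- G = 0
    have : A ^ (1 / p) ≤ 0 := by
      have : C * G ^ ((1:ℝ)/2) = 0 := by
        rw [← hGz, Real.zero_rpow (by norm_num), mul_zero]
      linarith [hSob, this ▸ hSob]
    have hAe : A ^ (1 / p) = 0 := le_antisymm this (rpow_nonneg hA0 _)
    have : A = 0 := by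
      rcases Real.rpow_eq_zero_iff_of_nonneg hA0 |>.mp hAe with ⟨h1, _⟩
      exact h1
    rw [this, ← hGz]
  · -- G > 0
    have key : A ≤ (C ^ p * G ^ ((p - 2) / 2)) * G := by
      have h1 : (A ^ (1/p)) ^ p ≤ (C * G ^ ((1:ℝ)/2)) ^ p :=
        Real.rpow_le_rpow (rpow_nonneg hA0 _) hSob hp0.le
      have h2 : (A ^ (1/p)) ^ p = A := by
        rw [← Real.rpow_mul hA0, one_div, inv_mul_cancel₀ hp0.ne', Real.rpow_one]
      have h3 : (C * G ^ ((1:ℝ)/2)) ^ p = C ^ p * G ^ (p / 2) := by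
        rw [Real.mul_rpow hC.le (rpow_nonneg hG0 _), ← Real.rpow_mul hG0]
        ring_nf
      have h4 : G ^ (p / 2) = G ^ ((p - 2) / 2) * G := by
        rw [show p/2 = (p-2)/2 + 1 by ring, Real.rpow_add hGpos, Real.rpow_one]
      calc A = (A ^ (1/p)) ^ p := h2.symm
        _ ≤ C ^ p * G ^ (p / 2) := h3 ▸ h1
        _ = (C ^ p * G ^ ((p - 2) / 2)) * G := by rw [h4]; ring
    have hGle : G ^ ((p - 2) / 2) ≤ GW ^ ((p - 2) / 2) := by
      have h5 : (G ^ ((1:ℝ)/2)) ^ (p - 2) ≤ (GW ^ ((1:ℝ)/2)) ^ (p - 2) :=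
        Real.rpow_le_rpow (rpow_nonneg hG0 _) hless.le (by linarith)
      rwa [← Real.rpow_mul hG0, ← Real.rpow_mul hGW0,
        show (1:ℝ)/2 * (p - 2) = (p - 2) / 2 by ring] at h5
    have hone : C ^ p * G ^ ((p - 2) / 2) ≤ 1 := by
      calc C ^ p * G ^ ((p - 2) / 2) ≤ C ^ p * GW ^ ((p - 2) / 2) := by
            apply mul_le_mul_of_nonneg_left hGle (rpow_nonneg hC.le _)
        _ = 1 := hCW
    calc A ≤ (C ^ p * G ^ ((p - 2) / 2)) * G := key
      _ ≤ 1 * G := mul_le_mul_of_nonneg_right hone hG0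
      _ = G := one_mul G
end

section
/- Given δ > 0, suppose u ∈ Ḣ¹(ℝ^d) with ‖∇u‖_{L²} ≤ (1 - 2δ/d)^{1/2}‖∇W‖_{L²}. Then ∫_{ℝ^d}(|∇u|² - |u|^{2*}) dx ≥ (1 - (1-2δ/d)^{(2*-2)/2}) ∫_{ℝ^d}|∇u|² dx, so in particular ∫(|∇u|² - |u|^{2*}) ≥ 0. -/
open Real MeasureTheory

/-- if `‖∇u‖_{L²} ≤ (1-2δ/d)^{1/2} ‖∇W‖_{L²}` then
`∫ (|∇u|² - |u|^{2*}) ≥ (1 - (1-2δ/d)^{(2*-2)/2}) ∫ |∇u|² ≥ 0`,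
given the Sobolev inequality with best constant `C` normalized by
`C^{2*} ‖∇W‖_{L²}^{2*-2} = 1`. -/
theorem stmt_5 (d : ℕ) (hd : 3 ≤ d) (hd' : d ≤ 5) (δ : ℝ) (hδ : 0 < δ)
    (hδd : 0 ≤ 1 - 2 * δ / (d : ℝ))
    (W u : EuclideanSpace ℝ (Fin d) → ℝ)
    (hW : ∀ x, W x =
      (1 + ‖x‖ ^ 2 / ((d : ℝ) * ((d : ℝ) - 2))) ^ (-(((d : ℝ) - 2) / 2)))
    (C : ℝ) (hC : 0 < C)
    -- Sobolev inequality for `u`: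
    (hSob : (∫ x, |u x| ^ ((2 * (d : ℝ)) / ((d : ℝ) - 2))) ^ (((d : ℝ) - 2) / (2 * (d : ℝ)))
        ≤ C * (∫ x, ‖gradient u x‖ ^ 2) ^ ((1 : ℝ) / 2))
    -- normalization of the best constant:
    (hCW : C ^ ((2 * (d : ℝ)) / ((d : ℝ) - 2))
        * (∫ x, ‖gradient W x‖ ^ 2) ^ ((((2 * (d : ℝ)) / ((d : ℝ) - 2)) - 2) / 2) = 1)
    -- `‖∇u‖_{L²} ≤ (1 - 2δ/d)^{1/2} ‖∇W‖_{L²}`: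
    (hbound : (∫ x, ‖gradient u x‖ ^ 2) ^ ((1 : ℝ) / 2)
        ≤ (1 - 2 * δ / (d : ℝ)) ^ ((1 : ℝ) / 2)
          * (∫ x, ‖gradient W x‖ ^ 2) ^ ((1 : ℝ) / 2)) :
    ((∫ x, ‖gradient u x‖ ^ 2) - ∫ x, |u x| ^ ((2 * (d : ℝ)) / ((d : ℝ) - 2))
      ≥ (1 - (1 - 2 * δ / (d : ℝ)) ^ (((2 * (d : ℝ)) / ((d : ℝ) - 2) - 2) / 2))
        * ∫ x, ‖gradient u x‖ ^ 2) ∧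
    0 ≤ (∫ x, ‖gradient u x‖ ^ 2) - ∫ x, |u x| ^ ((2 * (d : ℝ)) / ((d : ℝ) - 2)) := by
  have hd3 : (3:ℝ) ≤ (d:ℝ) := by exact_mod_cast hd
  have hdpos : (0:ℝ) < (d:ℝ) := by linarith
  have hd2 : (0:ℝ) < (d:ℝ) - 2 := by linarith
  set p : ℝ := (2 * (d : ℝ)) / ((d : ℝ) - 2) with hp
  set A : ℝ := ∫ x, ‖gradient u x‖ ^ 2 with hA
  set B : ℝ := ∫ x, |u x| ^ p with hB
  set G : ℝ := ∫ x, ‖gradient W x‖ ^ 2 with hG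
  set θ : ℝ := 1 - 2 * δ / (d : ℝ) with hθ
  have hp2 : 2 < p := by
    rw [hp, lt_div_iff₀ hd2]; linarith
  have hA0 : 0 ≤ A := integral_nonneg fun x => by positivity
  have hB0 : 0 ≤ B := integral_nonneg fun x => Real.rpow_nonneg (abs_nonneg _) _
  have hG0 : 0 ≤ G := integral_nonneg fun x => by positivity
  have hθ1 : θ ≤ 1 := by
    have : 0 < 2 * δ / (d : ℝ) := by positivity
    rw [hθ]; linarith
  have he0 : 0 ≤ (p - 2) / 2 := by linarith
  have hθe1 : θ ^ ((p - 2) / 2) ≤ 1 := Real.rpow_le_one hδd hθ1 he0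
  have hθe0 : 0 ≤ θ ^ ((p - 2) / 2) := Real.rpow_nonneg hδd _
  -- Step 1 : B ≤ C^p * A^(p/2)
  have hstep1 : B ≤ C ^ p * A ^ (p / 2) := by
    have h1 := Real.rpow_le_rpow (Real.rpow_nonneg hB0 _) hSob (by linarith : (0:ℝ) ≤ p)
    have hexp : ((d:ℝ) - 2) / (2 * (d:ℝ)) * p = 1 := by
      rw [hp]; field_simp
    rw [← Real.rpow_mul hB0, hexp, Real.rpow_one] at h1
    rwa [Real.mul_rpow hC.le (Real.rpow_nonneg hA0 _), ← Real.rpow_mul hA0,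
      one_div, inv_mul_eq_div] at h1
  have hkey : B ≤ θ ^ ((p - 2) / 2) * A := by
    rcases eq_or_lt_of_le hA0 with hAz | hApos
    · have : A ^ (p / 2) = 0 := by
        rw [← hAz, Real.zero_rpow (by positivity : p / 2 ≠ 0)]
      have hBle : B ≤ 0 := by
        calc B ≤ C ^ p * A ^ (p / 2) := hstep1
          _ = 0 := by rw [this, mul_zero]
      calc B ≤ 0 := hBle
        _ ≤ θ ^ ((p - 2) / 2) * A := by rw [← hAz, mul_zero]
    · -- A^(p/2) = A * A^((p-2)/2)
      have hsplit : A ^ (p / 2) = A * A ^ ((p - 2) / 2) := by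
        have h := Real.rpow_add hApos 1 ((p - 2) / 2)
        rw [Real.rpow_one] at h
        calc A ^ (p / 2) = A ^ (1 + (p - 2) / 2) := by congr 1; ring
          _ = A * A ^ ((p - 2) / 2) := h
      -- A^((p-2)/2) ≤ θ^((p-2)/2) * G^((p-2)/2)
      have hstep2 : A ^ ((p - 2) / 2) ≤ θ ^ ((p - 2) / 2) * G ^ ((p - 2) / 2) := by
        have h2 := Real.rpow_le_rpow (Real.rpow_nonneg hA0 _) hbound
          (by linarith : (0:ℝ) ≤ p - 2)
        rw [← Real.rpow_mul hA0,
          Real.mul_rpow (Real.rpow_nonneg hδd _) (Real.rpow_nonneg hG0 _),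
          ← Real.rpow_mul hδd, ← Real.rpow_mul hG0] at h2
        have e1 : (1:ℝ) / 2 * (p - 2) = (p - 2) / 2 := by ring
        rwa [e1] at h2
      have hCp : 0 ≤ C ^ p := Real.rpow_nonneg hC.le _
      calc B ≤ C ^ p * A ^ (p / 2) := hstep1
        _ = C ^ p * (A * A ^ ((p - 2) / 2)) := by rw [hsplit]
        _ ≤ C ^ p * (A * (θ ^ ((p - 2) / 2) * G ^ ((p - 2) / 2))) := by
            apply mul_le_mul_of_nonneg_left _ hCp
            exact mul_le_mul_of_nonneg_left hstep2 hA0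
        _ = θ ^ ((p - 2) / 2) * A * (C ^ p * G ^ ((p - 2) / 2)) := by ring
        _ = θ ^ ((p - 2) / 2) * A := by rw [hCW]; ring
  constructor
  · nlinarith
  · nlinarith
end

section
/- Let Ṽ₁, Ṽ₂ ∈ L^{2*}(ℝ^d) and let (λ_{j,n}, x_{j,n}) ∈ ℝ⁺×ℝ^d for j = 1,2 satisfy λ_{2,n}/λ_{1,n} + λ_{1,n}/λ_{2,n} + |x_{1,n}-x_{2,n}|/λ_{1,n} → ∞ as n → ∞. Define Ṽ_{j,n}(x) = λ_{j,n}^{-(d-2)/2} Ṽ_j((x - x_{j,n})/λ_{j,n}). Then ‖Ṽ_{1,n}·Ṽ_{2,n}‖_{L^{2*/2}(ℝ^d)} → 0 as n → ∞. -/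
/-!
Write `a = d/p`, so that `f ↦ λ^{-a} f((· - x₀)/λ)` preserves the `L^p` norm. By Hölder, the
`L^{p/2}` norm of the product of two rescaled profiles is at most `‖V₁‖_p ‖V₂‖_p`, uniformly in the
parameters, so by density it suffices to treat continuous compactly supported profiles. For those,
when one scale dominates, bound the wider profile in `L^∞` and the narrower one in `L^{p/2}`: this
gives `O((λ_narrow/λ_wide)^a)`. When the scales are comparable, the centres separate on the scale
of the profiles, the supports become disjoint and the product vanishes.
-/

open Real MeasureTheory Filter Module Metric
open scoped ENNReal Topology

section Density

variable {α F : Type*} [TopologicalSpace α] [NormalSpace α] [R1Space α]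
  [WeaklyLocallyCompactSpace α] [MeasurableSpace α] [BorelSpace α] {μ : Measure α} [μ.Regular]
  [NormedAddCommGroup F] [NormedSpace ℝ F] {p : ℝ≥0∞}

lemma MeasureTheory.MemLp.tendsto_zero_of_forall_hasCompactSupport {f : α → F}
    (hf : MemLp f p μ) (hp : p ≠ ∞) {ι : Type*} {l : Filter ι} {Φ : ι → (α → F) → ℝ≥0∞}
    {C : ℝ≥0∞} (hC : C ≠ ∞) (hΦ : ∀ i g, MemLp g p μ → Φ i f ≤ Φ i g + C * eLpNorm (f - g) p μ)
    (hcc : ∀ g, Continuous g → HasCompactSupport g → Tendsto (fun i => Φ i g) l (𝓝 0)) :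
    Tendsto (fun i => Φ i f) l (𝓝 0) := by
  rw [ENNReal.tendsto_nhds_zero]
  intro ε hε
  obtain ⟨g, hgc, hfg, hg, hgp⟩ :=
    hf.exists_hasCompactSupport_eLpNorm_sub_le hp (ε := ε / 2 / C) (by simp [hε.ne', hC])
  filter_upwards [(hcc g hg hgc).eventually (ge_mem_nhds (ENNReal.half_pos hε.ne'))] with i hi
  calc Φ i f ≤ Φ i g + C * eLpNorm (f - g) p μ := hΦ i g hgp
    _ ≤ ε / 2 + ε / 2 := add_le_add hi ((mul_le_mul_right hfg C).trans ENNReal.mul_div_le)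
    _ = ε := ENNReal.add_halves ε

end Density

section Rescale

variable {E : Type*} [NormedAddCommGroup E] [NormedSpace ℝ E] {a p : ℝ}

noncomputable def rescale (a lam : ℝ) (x₀ : E) (f : E → ℝ) : E → ℝ :=
  fun x => lam ^ (-a) * f (lam⁻¹ • (x - x₀))

lemma rescale_sub (a lam : ℝ) (x₀ : E) (f g : E → ℝ) :
    rescale a lam x₀ (f - g) = rescale a lam x₀ f - rescale a lam x₀ g := by
  ext x
  simp only [rescale, Pi.sub_apply, mul_sub]

lemma support_rescale_subset {W : E → ℝ} {R : ℝ} (hR : tsupport W ⊆ closedBall 0 R)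
    {lam : ℝ} (hlam : 0 < lam) (x₀ : E) :
    Function.support (rescale a lam x₀ W) ⊆ closedBall x₀ (lam * R) := by
  intro x hx
  have hW : lam⁻¹ • (x - x₀) ∈ closedBall 0 R :=
    hR (subset_tsupport W (right_ne_zero_of_mul hx))
  rw [mem_closedBall_zero_iff, norm_smul, norm_inv, norm_of_nonneg hlam.le,
    inv_mul_le_iff₀ hlam] at hW
  rwa [mem_closedBall, dist_eq_norm]

lemma rescale_mul_rescale_eq_zero {W₁ W₂ : E → ℝ} {R₁ R₂ : ℝ}
    (hR₁ : tsupport W₁ ⊆ closedBall 0 R₁) (hR₂ : tsupport W₂ ⊆ closedBall 0 R₂)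
    {l₁ l₂ : ℝ} (hl₁ : 0 < l₁) (hl₂ : 0 < l₂) {y₁ y₂ : E}
    (hsep : l₁ * R₁ + l₂ * R₂ < dist y₁ y₂) :
    rescale a l₁ y₁ W₁ * rescale a l₂ y₂ W₂ = 0 := by
  rw [← Function.support_eq_empty_iff, Function.support_mul', ← Set.disjoint_iff_inter_eq_empty]
  exact ((closedBall_disjoint_closedBall hsep).mono (support_rescale_subset hR₁ hl₁ y₁)
    (support_rescale_subset hR₂ hl₂ y₂))

variable [FiniteDimensional ℝ E] [MeasurableSpace E] [BorelSpace E] {μ : Measure E}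
  [μ.IsAddHaarMeasure]

lemma map_smul_sub_addHaar {lam : ℝ} (hlam : 0 < lam) (x₀ : E) :
    μ.map (fun x => lam⁻¹ • (x - x₀)) = ENNReal.ofReal (lam ^ finrank ℝ E) • μ := by
  change μ.map ((lam⁻¹ • ·) ∘ (· - x₀)) = _
  rw [← Measure.map_map (measurable_const_smul _) (measurable_sub_const x₀),
    (measurePreserving_sub_right μ x₀).map_eq, Measure.map_addHaar_smul μ (inv_ne_zero hlam.ne'),
    inv_pow, inv_inv, abs_of_pos (pow_pos hlam _)]

lemma quasiMeasurePreserving_smul_sub {lam : ℝ} (hlam : 0 < lam) (x₀ : E) :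
    Measure.QuasiMeasurePreserving (fun x => lam⁻¹ • (x - x₀)) μ μ :=
  ⟨(measurable_const_smul _).comp (measurable_sub_const x₀), by
    rw [map_smul_sub_addHaar hlam x₀]; exact Measure.smul_absolutelyContinuous⟩

lemma MeasureTheory.AEStronglyMeasurable.rescale {f : E → ℝ} (hf : AEStronglyMeasurable f μ)
    (a : ℝ) {lam : ℝ} (hlam : 0 < lam) (x₀ : E) : AEStronglyMeasurable (rescale a lam x₀ f) μ :=
  (hf.comp_quasiMeasurePreserving (quasiMeasurePreserving_smul_sub hlam x₀)).const_mul _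

lemma eLpNorm_rescale {f : E → ℝ} (hf : AEStronglyMeasurable f μ) (a : ℝ) {lam : ℝ}
    (hlam : 0 < lam) (x₀ : E) (r : ℝ≥0∞) :
    eLpNorm (rescale a lam x₀ f) r μ
      = ENNReal.ofReal (lam ^ (-a + finrank ℝ E / r.toReal)) * eLpNorm f r μ := by
  have hf' : AEStronglyMeasurable f (μ.map fun x => lam⁻¹ • (x - x₀)) := by
    rw [map_smul_sub_addHaar hlam x₀]; exact hf.mono_ac Measure.smul_absolutelyContinuous
  have hcomp : eLpNorm (fun x => f (lam⁻¹ • (x - x₀))) r μ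
      = ENNReal.ofReal (lam ^ finrank ℝ E) ^ (1 / r).toReal * eLpNorm f r μ := by
    rw [← Function.comp_def, ← eLpNorm_map_measure hf'
      (quasiMeasurePreserving_smul_sub hlam x₀).aemeasurable, map_smul_sub_addHaar hlam x₀,
      eLpNorm_smul_measure_of_ne_zero (ENNReal.ofReal_pos.mpr (pow_pos hlam _)).ne', smul_eq_mul]
  change eLpNorm ((lam ^ (-a)) • fun x => f (lam⁻¹ • (x - x₀))) r μ = _
  rw [eLpNorm_const_smul, hcomp, enorm_eq_ofReal (rpow_nonneg hlam.le _), ← mul_assoc,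
    ← rpow_natCast, ENNReal.ofReal_rpow_of_pos (rpow_pos_of_pos hlam _), ← rpow_mul hlam.le,
    ← ENNReal.ofReal_mul (rpow_nonneg hlam.le _), ← rpow_add hlam, one_div, ENNReal.toReal_inv,
    div_eq_mul_inv]

lemma eLpNorm_rescale_critical (hp : 0 < p) (hap : a * p = finrank ℝ E) {f : E → ℝ}
    (hf : AEStronglyMeasurable f μ) {lam : ℝ} (hlam : 0 < lam) (x₀ : E) :
    eLpNorm (rescale a lam x₀ f) (.ofReal p) μ = eLpNorm f (.ofReal p) μ := by
  rw [eLpNorm_rescale hf a hlam x₀, ENNReal.toReal_ofReal hp.le, ← hap,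
    mul_div_cancel_right₀ _ hp.ne', neg_add_cancel, rpow_zero, ENNReal.ofReal_one, one_mul]

lemma eLpNorm_rescale_half (hp : 0 < p) (hap : a * p = finrank ℝ E) {f : E → ℝ}
    (hf : AEStronglyMeasurable f μ) {lam : ℝ} (hlam : 0 < lam) (x₀ : E) :
    eLpNorm (rescale a lam x₀ f) (.ofReal (p / 2)) μ
      = ENNReal.ofReal (lam ^ a) * eLpNorm f (.ofReal (p / 2)) μ := by
  rw [eLpNorm_rescale hf a hlam x₀, ENNReal.toReal_ofReal (by positivity), ← hap]
  congr 3
  field_simp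
  ring

lemma holderTriple_ofReal_half (hp : 0 < p) :
    ENNReal.HolderTriple (.ofReal p) (.ofReal p) (.ofReal (p / 2)) := by
  constructor
  rw [← ENNReal.ofReal_inv_of_pos hp, ← ENNReal.ofReal_inv_of_pos (by positivity),
    ← ENNReal.ofReal_add (by positivity) (by positivity)]
  congr 1
  field_simp
  ring

lemma eLpNorm_rescale_mul_rescale_le (hp : 0 < p) (hap : a * p = finrank ℝ E) {f g : E → ℝ}
    (hf : AEStronglyMeasurable f μ) (hg : AEStronglyMeasurable g μ) {l₁ l₂ : ℝ} (hl₁ : 0 < l₁)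
    (hl₂ : 0 < l₂) (y₁ y₂ : E) :
    eLpNorm (rescale a l₁ y₁ f * rescale a l₂ y₂ g) (.ofReal (p / 2)) μ
      ≤ eLpNorm f (.ofReal p) μ * eLpNorm g (.ofReal p) μ := by
  calc eLpNorm (rescale a l₁ y₁ f * rescale a l₂ y₂ g) (.ofReal (p / 2)) μ
      ≤ eLpNorm (rescale a l₁ y₁ f) (.ofReal p) μ * eLpNorm (rescale a l₂ y₂ g) (.ofReal p) μ :=
        eLpNorm_smul_le_mul_eLpNorm (f := rescale a l₂ y₂ g) (φ := rescale a l₁ y₁ f)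
          (hpqr := holderTriple_ofReal_half hp) (hg.rescale a hl₂ y₂) (hf.rescale a hl₁ y₁)
    _ = _ := by rw [eLpNorm_rescale_critical hp hap hf hl₁, eLpNorm_rescale_critical hp hap hg hl₂]

lemma eLpNorm_rescale_mul_rescale_le_add (hp : 2 ≤ p) (hap : a * p = finrank ℝ E)
    {f₁ f₂ g : E → ℝ} (hf₁ : AEStronglyMeasurable f₁ μ) (hf₂ : AEStronglyMeasurable f₂ μ)
    (hg : AEStronglyMeasurable g μ) {l₁ l₂ : ℝ} (hl₁ : 0 < l₁) (hl₂ : 0 < l₂) (y₁ y₂ : E) :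
    eLpNorm (rescale a l₁ y₁ f₁ * rescale a l₂ y₂ g) (.ofReal (p / 2)) μ
      ≤ eLpNorm (rescale a l₁ y₁ f₂ * rescale a l₂ y₂ g) (.ofReal (p / 2)) μ
        + eLpNorm g (.ofReal p) μ * eLpNorm (f₁ - f₂) (.ofReal p) μ := by
  have hq : 1 ≤ ENNReal.ofReal (p / 2) := by rw [ENNReal.one_le_ofReal]; linarith
  have hsplit : rescale a l₁ y₁ f₁ * rescale a l₂ y₂ g = rescale a l₁ y₁ f₂ * rescale a l₂ y₂ g
      + rescale a l₁ y₁ (f₁ - f₂) * rescale a l₂ y₂ g := by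
    rw [rescale_sub, sub_mul, add_sub_cancel]
  rw [hsplit, mul_comm (eLpNorm g _ μ)]
  refine (eLpNorm_add_le ((hf₂.rescale a hl₁ y₁).mul (hg.rescale a hl₂ y₂))
    (((hf₁.sub hf₂).rescale a hl₁ y₁).mul (hg.rescale a hl₂ y₂)) hq).trans ?_
  gcongr
  exact eLpNorm_rescale_mul_rescale_le (by linarith) hap (hf₁.sub hf₂) hg hl₁ hl₂ y₁ y₂

lemma eLpNorm_rescale_mul_rescale_le_of_bound (hp : 0 < p) (hap : a * p = finrank ℝ E)
    {W₁ W₂ : E → ℝ} (hW₁ : AEStronglyMeasurable W₁ μ) {M : ℝ} (hM : ∀ y, ‖W₂ y‖ ≤ M)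
    {l₁ l₂ : ℝ} (hl₁ : 0 < l₁) (hl₂ : 0 < l₂) (y₁ y₂ : E) :
    eLpNorm (rescale a l₁ y₁ W₁ * rescale a l₂ y₂ W₂) (.ofReal (p / 2)) μ
      ≤ ENNReal.ofReal ((l₂ / l₁) ^ (-a))
        * (ENNReal.ofReal M * eLpNorm W₁ (.ofReal (p / 2)) μ) := by
  have hsup : eLpNorm (rescale a l₂ y₂ W₂) ∞ μ ≤ ENNReal.ofReal (l₂ ^ (-a) * M) := by
    rw [eLpNorm_exponent_top]
    refine eLpNormEssSup_le_of_ae_bound (.of_forall fun x => ?_)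
    rw [rescale, norm_mul, norm_of_nonneg (rpow_nonneg hl₂.le _)]
    exact mul_le_mul_of_nonneg_left (hM _) (rpow_nonneg hl₂.le _)
  calc eLpNorm (rescale a l₁ y₁ W₁ * rescale a l₂ y₂ W₂) (.ofReal (p / 2)) μ
      = eLpNorm (rescale a l₂ y₂ W₂ • rescale a l₁ y₁ W₁) (.ofReal (p / 2)) μ := by
        rw [smul_eq_mul, mul_comm]
    _ ≤ eLpNorm (rescale a l₂ y₂ W₂) ∞ μ * eLpNorm (rescale a l₁ y₁ W₁) (.ofReal (p / 2)) μ :=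
        eLpNorm_smul_le_eLpNorm_top_mul_eLpNorm _ (hW₁.rescale a hl₁ y₁) _
    _ ≤ ENNReal.ofReal (l₂ ^ (-a) * M)
          * (ENNReal.ofReal (l₁ ^ a) * eLpNorm W₁ (.ofReal (p / 2)) μ) := by
        rw [eLpNorm_rescale_half hp hap hW₁ hl₁]
        gcongr
    _ = _ := by
        rw [div_rpow hl₂.le hl₁.le, rpow_neg hl₁.le, div_inv_eq_mul,
          ENNReal.ofReal_mul (by positivity), ENNReal.ofReal_mul (by positivity)]
        ring

lemma eLpNorm_rescale_mul_rescale_le_of_orthogonal (hp : 0 < p) (hap : a * p = finrank ℝ E)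
    {W₁ W₂ : E → ℝ} (hW₁ : AEStronglyMeasurable W₁ μ) (hW₂ : AEStronglyMeasurable W₂ μ)
    {M₁ M₂ : ℝ} (hM₁ : ∀ y, ‖W₁ y‖ ≤ M₁) (hM₂ : ∀ y, ‖W₂ y‖ ≤ M₂) {R₁ R₂ : ℝ}
    (hR₁ : tsupport W₁ ⊆ closedBall 0 R₁) (hR₂ : tsupport W₂ ⊆ closedBall 0 R₂) (hR₂0 : 0 ≤ R₂)
    {C : ℝ} (hC : 0 < C) {l₁ l₂ : ℝ} (hl₁ : 0 < l₁) (hl₂ : 0 < l₂) {y₁ y₂ : E}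
    (horth : 2 * C + R₁ + C * R₂ ≤ l₂ / l₁ + l₁ / l₂ + ‖y₁ - y₂‖ / l₁) :
    eLpNorm (rescale a l₁ y₁ W₁ * rescale a l₂ y₂ W₂) (.ofReal (p / 2)) μ
      ≤ ENNReal.ofReal (C ^ (-a)) * (ENNReal.ofReal M₂ * eLpNorm W₁ (.ofReal (p / 2)) μ
        + ENNReal.ofReal M₁ * eLpNorm W₂ (.ofReal (p / 2)) μ) := by
  have ha : -a ≤ 0 := by
    have : 0 ≤ a * p := hap ▸ Nat.cast_nonneg _
    linarith [nonneg_of_mul_nonneg_left this hp]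
  by_cases h₂₁ : C ≤ l₂ / l₁
  · refine (eLpNorm_rescale_mul_rescale_le_of_bound hp hap hW₁ hM₂ hl₁ hl₂ y₁ y₂).trans ?_
    gcongr ?_ * ?_
    · exact ENNReal.ofReal_le_ofReal (rpow_le_rpow_of_nonpos hC h₂₁ ha)
    · exact le_self_add
  by_cases h₁₂ : C ≤ l₁ / l₂
  · rw [mul_comm]
    refine (eLpNorm_rescale_mul_rescale_le_of_bound hp hap hW₂ hM₁ hl₂ hl₁ y₂ y₁).trans ?_
    gcongr ?_ * ?_
    · exact ENNReal.ofReal_le_ofReal (rpow_le_rpow_of_nonpos hC h₁₂ ha)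
    · exact le_add_self
  -- Comparable scales: the threshold in `horth` then forces the rescaled supports apart.
  have hfar : l₁ * R₁ + l₂ * R₂ < dist y₁ y₂ := by
    have hR : R₁ + l₂ / l₁ * R₂ < ‖y₁ - y₂‖ / l₁ := by
      nlinarith [mul_le_mul_of_nonneg_right (not_le.mp h₂₁).le hR₂0]
    calc l₁ * R₁ + l₂ * R₂ = (R₁ + l₂ / l₁ * R₂) * l₁ := by field_simp
      _ < dist y₁ y₂ := by rwa [dist_eq_norm, ← lt_div_iff₀ hl₁]
  rw [rescale_mul_rescale_eq_zero hR₁ hR₂ hl₁ hl₂ hfar, eLpNorm_zero]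
  exact bot_le

lemma tendsto_eLpNorm_rescale_mul_rescale_of_hasCompactSupport (hp : 0 < p) (ha : 0 < a)
    (hap : a * p = finrank ℝ E) {W₁ W₂ : E → ℝ} (hW₁ : Continuous W₁)
    (hW₁c : HasCompactSupport W₁) (hW₂ : Continuous W₂) (hW₂c : HasCompactSupport W₂)
    {l₁ l₂ : ℕ → ℝ} {y₁ y₂ : ℕ → E}
    (hl₁ : ∀ n, 0 < l₁ n) (hl₂ : ∀ n, 0 < l₂ n)
    (horth : Tendsto (fun n => l₂ n / l₁ n + l₁ n / l₂ n + ‖y₁ n - y₂ n‖ / l₁ n) atTop atTop) :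
    Tendsto (fun n => eLpNorm (rescale a (l₁ n) (y₁ n) W₁ * rescale a (l₂ n) (y₂ n) W₂)
      (.ofReal (p / 2)) μ) atTop (𝓝 0) := by
  obtain ⟨M₁, hM₁⟩ := hW₁.bounded_above_of_compact_support hW₁c
  obtain ⟨M₂, hM₂⟩ := hW₂.bounded_above_of_compact_support hW₂c
  obtain ⟨R₁, -, hR₁⟩ := hW₁c.isCompact.isBounded.subset_closedBall_lt 0 0
  obtain ⟨R₂, hR₂0, hR₂⟩ := hW₂c.isCompact.isBounded.subset_closedBall_lt 0 0
  set K := ENNReal.ofReal M₂ * eLpNorm W₁ (.ofReal (p / 2)) μ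
    + ENNReal.ofReal M₁ * eLpNorm W₂ (.ofReal (p / 2)) μ
  have hK : K ≠ ∞ := by
    have h₁ := (hW₁.memLp_of_hasCompactSupport (μ := μ) (p := .ofReal (p / 2)) hW₁c).2.ne
    have h₂ := (hW₂.memLp_of_hasCompactSupport (μ := μ) (p := .ofReal (p / 2)) hW₂c).2.ne
    finiteness
  have hdecay : Tendsto (fun C : ℝ => ENNReal.ofReal (C ^ (-a)) * K) atTop (𝓝 0) := by
    simpa using ENNReal.Tendsto.mul_const
      (ENNReal.tendsto_ofReal (tendsto_rpow_neg_atTop ha)) (.inr hK)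
  rw [ENNReal.tendsto_nhds_zero]
  intro ε hε
  obtain ⟨C, hC, hCε⟩ := ((eventually_gt_atTop 0).and (hdecay.eventually (ge_mem_nhds hε))).exists
  filter_upwards [horth.eventually_ge_atTop (2 * C + R₁ + C * R₂)] with n hn
  exact (eLpNorm_rescale_mul_rescale_le_of_orthogonal hp hap hW₁.aestronglyMeasurable
    hW₂.aestronglyMeasurable hM₁ hM₂ hR₁ hR₂ hR₂0.le hC (hl₁ n) (hl₂ n) hn).trans hCε

theorem tendsto_eLpNorm_rescale_mul_rescale (hp : 2 ≤ p) (ha : 0 < a)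
    (hap : a * p = finrank ℝ E) {V₁ V₂ : E → ℝ} (hV₁ : MemLp V₁ (.ofReal p) μ)
    (hV₂ : MemLp V₂ (.ofReal p) μ)
    {l₁ l₂ : ℕ → ℝ} {y₁ y₂ : ℕ → E} (hl₁ : ∀ n, 0 < l₁ n) (hl₂ : ∀ n, 0 < l₂ n)
    (horth : Tendsto (fun n => l₂ n / l₁ n + l₁ n / l₂ n + ‖y₁ n - y₂ n‖ / l₁ n) atTop atTop) :
    Tendsto (fun n => eLpNorm (rescale a (l₁ n) (y₁ n) V₁ * rescale a (l₂ n) (y₂ n) V₂)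
      (.ofReal (p / 2)) μ) atTop (𝓝 0) := by
  have hp₀ : 0 < p := by linarith
  refine hV₁.tendsto_zero_of_forall_hasCompactSupport (Φ := fun n f => eLpNorm
      (rescale a (l₁ n) (y₁ n) f * rescale a (l₂ n) (y₂ n) V₂) (.ofReal (p / 2)) μ)
    ENNReal.ofReal_ne_top hV₂.eLpNorm_ne_top
    (fun n g hg => eLpNorm_rescale_mul_rescale_le_add hp hap hV₁.1 hg.1 hV₂.1 (hl₁ n) (hl₂ n) _ _)
    fun W₁ hW₁ hW₁c => ?_
  simp only [mul_comm (rescale a (l₁ _) (y₁ _) W₁)]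
  refine hV₂.tendsto_zero_of_forall_hasCompactSupport (Φ := fun n f => eLpNorm
      (rescale a (l₂ n) (y₂ n) f * rescale a (l₁ n) (y₁ n) W₁) (.ofReal (p / 2)) μ)
    ENNReal.ofReal_ne_top (hW₁.memLp_of_hasCompactSupport hW₁c).eLpNorm_ne_top
    (fun n g hg => eLpNorm_rescale_mul_rescale_le_add hp hap hV₂.1 hg.1 hW₁.aestronglyMeasurable
      (hl₂ n) (hl₁ n) _ _)
    fun W₂ hW₂ hW₂c => ?_
  simp only [mul_comm (rescale a (l₂ _) (y₂ _) W₂)]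
  exact tendsto_eLpNorm_rescale_mul_rescale_of_hasCompactSupport hp₀ ha hap hW₁ hW₁c hW₂ hW₂c
    hl₁ hl₂ horth

end Rescale

theorem stmt_8_general (d : ℕ) (hd : 3 ≤ d)
    (V₁ V₂ : EuclideanSpace ℝ (Fin d) → ℝ)
    (hV₁ : MemLp V₁ (ENNReal.ofReal ((2 * (d : ℝ)) / ((d : ℝ) - 2))) volume)
    (hV₂ : MemLp V₂ (ENNReal.ofReal ((2 * (d : ℝ)) / ((d : ℝ) - 2))) volume)
    (lam₁ lam₂ : ℕ → ℝ) (x₁ x₂ : ℕ → EuclideanSpace ℝ (Fin d))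
    (hlam₁ : ∀ n, 0 < lam₁ n) (hlam₂ : ∀ n, 0 < lam₂ n)
    (horth : Tendsto (fun n =>
        lam₂ n / lam₁ n + lam₁ n / lam₂ n + ‖x₁ n - x₂ n‖ / lam₁ n) atTop atTop) :
    Tendsto (fun n => eLpNorm (fun x =>
        ((lam₁ n) ^ (-(((d : ℝ) - 2) / 2)) * V₁ ((lam₁ n)⁻¹ • (x - x₁ n)))
          * ((lam₂ n) ^ (-(((d : ℝ) - 2) / 2)) * V₂ ((lam₂ n)⁻¹ • (x - x₂ n))))
      (ENNReal.ofReal ((d : ℝ) / ((d : ℝ) - 2))) volume) atTop (nhds 0) := by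
  have hd₂ : (0 : ℝ) < d - 2 := by
    have : (3 : ℝ) ≤ d := by exact_mod_cast hd
    linarith
  have hq : (d : ℝ) / (d - 2) = 2 * d / (d - 2) / 2 := by field_simp
  rw [hq]
  exact tendsto_eLpNorm_rescale_mul_rescale (by rw [le_div_iff₀ hd₂]; linarith) (by linarith)
    (by rw [finrank_euclideanSpace_fin]; field_simp) hV₁ hV₂ hlam₁ hlam₂ horth

/-- if `Ṽ₁, Ṽ₂ ∈ L^{2*}(ℝ^d)` and the scaling/translation parameters
are asymptotically orthogonal, then the product of the rescaled profiles tends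
to `0` in `L^{2*/2}`. -/
theorem stmt_8 (d : ℕ) (hd : 3 ≤ d) (hd' : d ≤ 5)
    (V₁ V₂ : EuclideanSpace ℝ (Fin d) → ℝ)
    (hV₁ : MemLp V₁ (ENNReal.ofReal ((2 * (d : ℝ)) / ((d : ℝ) - 2))) volume)
    (hV₂ : MemLp V₂ (ENNReal.ofReal ((2 * (d : ℝ)) / ((d : ℝ) - 2))) volume)
    (lam₁ lam₂ : ℕ → ℝ) (x₁ x₂ : ℕ → EuclideanSpace ℝ (Fin d))
    (hlam₁ : ∀ n, 0 < lam₁ n) (hlam₂ : ∀ n, 0 < lam₂ n)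
    (horth : Tendsto (fun n =>
        lam₂ n / lam₁ n + lam₁ n / lam₂ n + ‖x₁ n - x₂ n‖ / lam₁ n) atTop atTop) :
    Tendsto (fun n => eLpNorm (fun x =>
        ((lam₁ n) ^ (-(((d : ℝ) - 2) / 2)) * V₁ ((lam₁ n)⁻¹ • (x - x₁ n)))
          * ((lam₂ n) ^ (-(((d : ℝ) - 2) / 2)) * V₂ ((lam₂ n)⁻¹ • (x - x₂ n))))
      (ENNReal.ofReal ((d : ℝ) / ((d : ℝ) - 2))) volume) atTop (nhds 0) :=
  stmt_8_general d hd V₁ V₂ hV₁ hV₂ lam₁ lam₂ x₁ x₂ hlam₁ hlam₂ horth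
end

section
/- For 2 ≤ σ ≤ 2* = 2d/(d-2), the function φ(x) = (|x|/sinh|x|)^σ on ℝ^d (with φ(0)=1) is continuous, takes values in (0,1], tends to 0 as |x| → ∞, and satisfies 2*(1 - φ(x)) + x·∇φ(x) ≥ 0 for all x ∈ ℝ^d. -/
/-!
Write `φ x = g ‖x‖` with `g r = (r / sinh r) ^ σ`. Then `x · ∇φ(x) = r g'(r) = σ φ (1 - r coth r)`,
so, as `σ ≤ 2*`, it suffices that `φ · r coth r ≤ 1`. For `σ ≥ 2` we have
`φ ≤ (r / sinh r) ^ 2`, which reduces this to Lazarević's inequality `r ^ 3 cosh r ≤ sinh ^ 3 r`;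
after squaring, that follows from `sinh r ≥ r + r ^ 3 / 6`.
-/

open Real Filter Topology

namespace Real

theorem add_pow_three_div_six_le_sinh {x : ℝ} (hx : 0 ≤ x) : x + x ^ 3 / 6 ≤ sinh x := by
  have h := sum_le_hasSum (Finset.range 2) (fun n _ => by positivity) (hasSum_sinh x)
  norm_num [Finset.sum_range_succ, Nat.factorial] at h
  linarith

theorem pow_six_mul_sq_add_one_le {x s : ℝ} (hx : 0 ≤ x) (hs : x + x ^ 3 / 6 ≤ s) :
    x ^ 6 * (s ^ 2 + 1) ≤ s ^ 6 := by
  have hp0 : 0 ≤ x + x ^ 3 / 6 := by positivity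
  have hp4 : x ^ 6 ≤ (x + x ^ 3 / 6) ^ 4 := by
    have h : x ^ 2 ≤ (1 + x ^ 2 / 6) ^ 4 := by
      nlinarith [sq_nonneg (x ^ 2 - 3), sq_nonneg x, pow_nonneg (sq_nonneg x) 3,
        pow_nonneg (sq_nonneg x) 4]
    calc x ^ 6 = x ^ 4 * x ^ 2 := by ring
      _ ≤ x ^ 4 * (1 + x ^ 2 / 6) ^ 4 := by gcongr
      _ = (x + x ^ 3 / 6) ^ 4 := by ring
  have hp6 : x ^ 6 ≤ (x + x ^ 3 / 6) ^ 2 * ((x + x ^ 3 / 6) ^ 4 - x ^ 6) := by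
    have h : 1 ≤ (1 + x ^ 2 / 6) ^ 2 * ((1 + x ^ 2 / 6) ^ 4 - x ^ 2) := by
      nlinarith [sq_nonneg x, pow_nonneg (sq_nonneg x) 2, pow_nonneg (sq_nonneg x) 3,
        pow_nonneg (sq_nonneg x) 4, pow_nonneg (sq_nonneg x) 5, pow_nonneg (sq_nonneg x) 6]
    calc x ^ 6 = x ^ 6 * 1 := by ring
      _ ≤ x ^ 6 * ((1 + x ^ 2 / 6) ^ 2 * ((1 + x ^ 2 / 6) ^ 4 - x ^ 2)) := by gcongr
      _ = _ := by ring
  have hs2 := pow_le_pow_left₀ hp0 hs 2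
  have hs4 := pow_le_pow_left₀ hp0 hs 4
  nlinarith [mul_le_mul hs2 (sub_le_sub_right hs4 (x ^ 6)) (by linarith) (by positivity)]

theorem pow_three_mul_cosh_le_sinh_pow_three {x : ℝ} (hx : 0 ≤ x) :
    x ^ 3 * cosh x ≤ sinh x ^ 3 := by
  have hsq : (x ^ 3 * cosh x) ^ 2 ≤ (sinh x ^ 3) ^ 2 := by
    calc (x ^ 3 * cosh x) ^ 2 = x ^ 6 * (sinh x ^ 2 + 1) := by rw [mul_pow, cosh_sq]; ring
      _ ≤ sinh x ^ 6 := pow_six_mul_sq_add_one_le hx (add_pow_three_div_six_le_sinh hx)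
      _ = (sinh x ^ 3) ^ 2 := by ring
  have hS := sinh_nonneg_iff.mpr hx
  exact (sq_le_sq₀ (by positivity) (by positivity)).mp hsq

theorem self_div_sinh_pos {x : ℝ} (hx : 0 < x) : 0 < x / sinh x :=
  div_pos hx (sinh_pos_iff.mpr hx)

theorem self_div_sinh_le_one {x : ℝ} (hx : 0 ≤ x) : x / sinh x ≤ 1 :=
  div_le_one_of_le₀ (self_le_sinh_iff.mpr hx) (sinh_nonneg_iff.mpr hx)

theorem self_div_sinh_rpow_le_one {σ x : ℝ} (hσ : 0 ≤ σ) (hx : 0 ≤ x) : (x / sinh x) ^ σ ≤ 1 :=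
  rpow_le_one (div_nonneg hx (sinh_nonneg_iff.mpr hx)) (self_div_sinh_le_one hx) hσ

theorem tendsto_self_div_sinh_nhdsNE_zero : Tendsto (fun x => x / sinh x) (𝓝[≠] 0) (𝓝 1) := by
  have h := hasDerivAt_iff_tendsto_slope.mp (hasDerivAt_sinh 0)
  rw [cosh_zero] at h
  simpa [slope_def_field] using h.inv₀ one_ne_zero

theorem tendsto_self_div_sinh_atTop : Tendsto (fun x => x / sinh x) atTop (𝓝 0) := by
  refine squeeze_zero' ?_ ?_
    (tendsto_const_nhds (x := (6 : ℝ)).div_atTop (tendsto_pow_atTop two_ne_zero))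
  · filter_upwards [eventually_ge_atTop 0] with x hx
    exact div_nonneg hx (sinh_nonneg_iff.mpr hx)
  · filter_upwards [eventually_gt_atTop 0] with x hx
    rw [div_le_div_iff₀ (sinh_pos_iff.mpr hx) (by positivity)]
    nlinarith [add_pow_three_div_six_le_sinh hx.le]

theorem tendsto_self_div_sinh_rpow_nhdsGT_zero (σ : ℝ) :
    Tendsto (fun x => (x / sinh x) ^ σ) (𝓝[>] 0) (𝓝 1) := by
  simpa using (tendsto_self_div_sinh_nhdsNE_zero.mono_left (nhdsGT_le_nhdsNE 0)).rpow_const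
    (p := σ) (Or.inl one_ne_zero)

theorem tendsto_self_div_sinh_rpow_atTop {σ : ℝ} (hσ : 0 < σ) :
    Tendsto (fun x => (x / sinh x) ^ σ) atTop (𝓝 0) := by
  simpa [zero_rpow hσ.ne'] using tendsto_self_div_sinh_atTop.rpow_const (p := σ) (Or.inr hσ.le)

theorem hasDerivAt_self_div_sinh_rpow {x : ℝ} (hx : 0 < x) (σ : ℝ) :
    HasDerivAt (fun t => (t / sinh t) ^ σ)
      (σ * (x / sinh x) ^ σ * (1 - x * cosh x / sinh x) / x) x := by
  have hS := sinh_pos_iff.mpr hx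
  refine (((hasDerivAt_id' x).div (hasDerivAt_sinh x) hS.ne').rpow_const
    (p := σ) (Or.inl (self_div_sinh_pos hx).ne')).congr_deriv ?_
  simp only [Pi.div_apply]
  rw [rpow_sub_one (self_div_sinh_pos hx).ne']
  field_simp

theorem self_div_sinh_rpow_mul_le_one {σ x : ℝ} (hσ : 2 ≤ σ) (hx : 0 < x) :
    (x / sinh x) ^ σ * (x * cosh x / sinh x) ≤ 1 := by
  have hsq : (x / sinh x) ^ σ ≤ (x / sinh x) ^ 2 := by
    rw [← rpow_natCast]
    exact rpow_le_rpow_of_exponent_ge (self_div_sinh_pos hx) (self_div_sinh_le_one hx.le)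
      (by norm_num [hσ])
  calc (x / sinh x) ^ σ * (x * cosh x / sinh x)
      ≤ (x / sinh x) ^ 2 * (x * cosh x / sinh x) := by gcongr
    _ = x ^ 3 * cosh x / sinh x ^ 3 := by field_simp
    _ ≤ 1 := div_le_one_of_le₀ (pow_three_mul_cosh_le_sinh_pow_three hx.le) (by positivity)

theorem mul_one_sub_self_div_sinh_rpow_add_nonneg {σ c x : ℝ} (hσ : 2 ≤ σ) (hc : σ ≤ c)
    (hx : 0 < x) :
    0 ≤ c * (1 - (x / sinh x) ^ σ) + σ * (x / sinh x) ^ σ * (1 - x * cosh x / sinh x) := by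
  have hP := self_div_sinh_rpow_le_one (σ := σ) (by linarith) hx.le
  have hPq := self_div_sinh_rpow_mul_le_one hσ hx
  nlinarith [mul_nonneg (sub_nonneg.mpr hc) (sub_nonneg.mpr hP),
    mul_nonneg (by linarith : 0 ≤ σ) (sub_nonneg.mpr hPq)]

end Real

section Radial

variable {E : Type*} [NormedAddCommGroup E] {g : ℝ → ℝ}

theorem hasGradientAt_comp_norm [InnerProductSpace ℝ E] [CompleteSpace E] {g' : ℝ} {x : E}
    (hx : x ≠ 0) (hg : HasDerivAt g g' ‖x‖) :
    HasGradientAt (fun y => g ‖y‖) ((g' / ‖x‖) • x) x := by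
  have hr := norm_pos_iff.mpr hx
  have hnorm : HasFDerivAt (fun y : E => ‖y‖) (‖x‖⁻¹ • innerSL ℝ x) x := by
    have h := (hasDerivAt_sqrt (pow_pos hr 2).ne').comp_hasFDerivAt x
      (hasStrictFDerivAt_norm_sq x).hasFDerivAt
    rw [show (fun y : E => ‖y‖) = fun y => √(‖y‖ ^ 2) from
      funext fun y => (sqrt_sq (norm_nonneg y)).symm]
    refine h.congr_fderiv ?_
    ext y
    simp only [sqrt_sq (norm_nonneg x), one_div, mul_inv_rev, smul_apply, coe_innerSL_apply,
      nsmul_eq_mul, Nat.cast_ofNat, smul_eq_mul]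
    field_simp
  refine (hg.comp_hasFDerivAt x hnorm).congr_fderiv ?_
  ext y
  simp only [smul_apply, coe_innerSL_apply, smul_eq_mul, map_smul,
    InnerProductSpace.toDual_apply_apply]
  ring

variable [DecidableEq E] {a : ℝ}

theorem continuous_update_comp_norm (hg : ∀ r, 0 < r → ContinuousAt g r)
    (h0 : Tendsto g (𝓝[>] 0) (𝓝 a)) : Continuous (Function.update (fun x : E => g ‖x‖) 0 a) := by
  refine continuous_iff_continuousAt.mpr fun x => ?_
  rcases eq_or_ne x 0 with rfl | hx
  · exact continuousAt_update_same.mpr (h0.comp tendsto_norm_nhdsNE_zero)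
  · exact (continuousAt_update_of_ne hx).mpr
      ((hg _ (norm_pos_iff.mpr hx)).comp continuous_norm.continuousAt)

theorem tendsto_update_comp_norm_cocompact [ProperSpace E] {b : ℝ} (hg : Tendsto g atTop (𝓝 b)) :
    Tendsto (Function.update (fun x : E => g ‖x‖) 0 a) (cocompact E) (𝓝 b) := by
  refine (hg.comp tendsto_norm_cocompact_atTop).congr' ?_
  filter_upwards [tendsto_norm_cocompact_atTop.eventually_gt_atTop 0] with x hx
  exact (Function.update_of_ne (norm_pos_iff.mp hx) _ _).symm

end Radial

theorem stmt_14_general (d : ℕ)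
    (σ : ℝ) (hσ : 2 ≤ σ) (hσ' : σ ≤ (2 * (d : ℝ)) / ((d : ℝ) - 2))
    (φ : EuclideanSpace ℝ (Fin d) → ℝ)
    (hφdef : ∀ x, φ x = if x = (0 : EuclideanSpace ℝ (Fin d)) then 1 else (‖x‖ / Real.sinh ‖x‖) ^ σ) :
    Continuous φ ∧
    (∀ x, 0 < φ x ∧ φ x ≤ 1) ∧
    Tendsto φ (cocompact (EuclideanSpace ℝ (Fin d))) (nhds 0) ∧
    (∀ x, 0 ≤ ((2 * (d : ℝ)) / ((d : ℝ) - 2)) * (1 - φ x)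
        + (inner ℝ x (gradient φ x) : ℝ)) := by
  let g : ℝ → ℝ := fun r => (r / sinh r) ^ σ
  have hφ : φ = Function.update (fun x : EuclideanSpace ℝ (Fin d) => g ‖x‖) 0 1 := by
    funext x
    by_cases hx : x = 0 <;> simp [g, hφdef, hx]
  have hφ_ne {x} (hx : x ≠ 0) : φ x = g ‖x‖ := by
    rw [hφ, Function.update_of_ne hx]
  refine ⟨?_, fun x => ?_, ?_, fun x => ?_⟩
  · rw [hφ]
    exact continuous_update_comp_norm
      (fun r hr => (hasDerivAt_self_div_sinh_rpow hr σ).continuousAt)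
      (tendsto_self_div_sinh_rpow_nhdsGT_zero σ)
  · rcases eq_or_ne x 0 with rfl | hx
    · simp [hφdef]
    have hr := norm_pos_iff.mpr hx
    rw [hφ_ne hx]
    exact ⟨rpow_pos_of_pos (self_div_sinh_pos hr) σ,
      self_div_sinh_rpow_le_one (by linarith) hr.le⟩
  · rw [hφ]
    exact tendsto_update_comp_norm_cocompact (tendsto_self_div_sinh_rpow_atTop (by linarith))
  · rcases eq_or_ne x 0 with rfl | hx
    · simp [hφdef]
    have hr := norm_pos_iff.mpr hx
    have hgrad := ((hasGradientAt_comp_norm hx (hasDerivAt_self_div_sinh_rpow hr σ))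
      |>.congr_of_eventuallyEq (eventually_ne_nhds hx |>.mono fun y hy => hφ_ne hy)).gradient
    rw [hgrad, hφ_ne hx, real_inner_smul_right, real_inner_self_eq_norm_sq]
    convert mul_one_sub_self_div_sinh_rpow_add_nonneg hσ hσ' hr using 2
    field_simp

/-- for `2 ≤ σ ≤ 2* = 2d/(d-2)`, the function
`φ(x) = (|x|/sinh|x|)^σ` (with `φ(0) = 1`) is continuous, takes values in `(0,1]`,
vanishes at infinity, and satisfies `2*(1 - φ(x)) + x·∇φ(x) ≥ 0` for all `x`. -/
theorem stmt_14 (d : ℕ) (hd : 3 ≤ d) (hd' : d ≤ 5)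
    (σ : ℝ) (hσ : 2 ≤ σ) (hσ' : σ ≤ (2 * (d : ℝ)) / ((d : ℝ) - 2))
    (φ : EuclideanSpace ℝ (Fin d) → ℝ)
    (hφdef : ∀ x, φ x = if x = (0 : EuclideanSpace ℝ (Fin d)) then 1 else (‖x‖ / Real.sinh ‖x‖) ^ σ) :
    Continuous φ ∧
    (∀ x, 0 < φ x ∧ φ x ≤ 1) ∧
    Tendsto φ (cocompact (EuclideanSpace ℝ (Fin d))) (nhds 0) ∧
    (∀ x, 0 ≤ ((2 * (d : ℝ)) / ((d : ℝ) - 2)) * (1 - φ x)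
        + (inner ℝ x (gradient φ x) : ℝ)) :=
  stmt_14_general d σ hσ hσ' φ hφdef
end

section
/- If v(r,t) is a radial solution of ∂²_t v - (Δ_{ℍ³}+1)v = |v|⁴v, then u(r,t) = (sinh r / r) v(r,t) solves ∂²_t u - Δ_{ℝ³} u = φ(x)|u|⁴u with φ(x) = |x|⁴/sinh⁴|x|, and the energies agree: ∫_{ℍ³}(½|∇v|² - ½|v|² + ½|∂_t v|² - (1/6)|v|⁶)dμ = ∫_{ℝ³}(½|∇u|² + ½|∂_t u|² - (φ/6)|u|⁶)dx. -/
open Real MeasureTheory Set Filter Topology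

/-!
Writing `U = (sinh r / r) V`, the identity `r U = sinh r · V` reduces both claims to `∂_r²`:
`r (Δ_{ℝ³} U) = ∂_r² (r U)` and `sinh r · (Δ_{ℍ³} + 1) V = ∂_r² (sinh r · V)`, which gives the
equation, the nonlinearity picking up the factor `(r / sinh r)⁴`. For the energy, the kinetic and
potential densities match exactly after the change of weight `r² ↔ sinh² r`, while the gradient
densities differ by the derivative of `sinh r (cosh r - sinh r / r) V²`, a function vanishing at
`0` and at infinity; hence it integrates to zero over `(0, ∞)`.
-/

theorem deriv_deriv_fun_mul {𝕜 : Type*} [NontriviallyNormedField 𝕜] {f g : 𝕜 → 𝕜} {x : 𝕜}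
    (hf : ContDiffAt 𝕜 2 f x) (hg : ContDiffAt 𝕜 2 g x) :
    deriv (deriv fun y => f y * g y) x
      = deriv (deriv f) x * g x + 2 * (deriv f x * deriv g x) + f x * deriv (deriv g) x := by
  have h := iteratedDeriv_fun_mul (n := 2) hf hg
  simp only [iteratedDeriv_succ, iteratedDeriv_zero, Finset.sum_range_succ,
    Finset.sum_range_zero] at h
  rw [h]
  norm_num
  ring

theorem deriv_deriv_sinh_mul {V : ℝ → ℝ} {r : ℝ} (hV : ContDiffAt ℝ 2 V r) :
    deriv (deriv fun ρ => sinh ρ * V ρ) r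
      = sinh r * deriv (deriv V) r + 2 * cosh r * deriv V r + sinh r * V r := by
  rw [deriv_deriv_fun_mul contDiff_sinh.contDiffAt hV, Real.deriv_sinh, Real.deriv_cosh]
  ring

theorem radialLaplacian_sinh_div_mul {V : ℝ → ℝ} {r : ℝ} (hV : ContDiffAt ℝ 2 V r) (hr : r ≠ 0) :
    deriv (deriv fun ρ => sinh ρ / ρ * V ρ) r + 2 / r * deriv (fun ρ => sinh ρ / ρ * V ρ) r
      = sinh r / r * (deriv (deriv V) r + 2 * (cosh r / sinh r) * deriv V r + V r) := by
  set U := fun ρ => sinh ρ / ρ * V ρ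
  have hU : ContDiffAt ℝ 2 U r :=
    (contDiff_sinh.contDiffAt.div contDiffAt_id hr).mul hV
  have hrU : (fun ρ => ρ * U ρ) =ᶠ[𝓝 r] fun ρ => sinh ρ * V ρ := by
    filter_upwards [isOpen_ne.mem_nhds hr] with ρ hρ
    simp only [U]
    field_simp
  have key := hrU.deriv.deriv_eq
  rw [deriv_deriv_fun_mul (f := fun ρ => ρ) contDiffAt_id hU, deriv_deriv_sinh_mul hV] at key
  simp only [deriv_id'', deriv_const'] at key
  have hs : sinh r ≠ 0 := sinh_ne_zero.2 hr
  field_simp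
  linear_combination key

theorem continuous_dslope_sinh : Continuous (dslope sinh 0) :=
  continuousOn_univ.1 <|
    (continuousOn_dslope univ_mem).2 ⟨continuous_sinh.continuousOn, differentiable_sinh 0⟩

theorem dslope_sinh_zero {r : ℝ} (hr : r ≠ 0) : dslope sinh 0 r = sinh r / r := by
  rw [dslope_of_ne _ hr, slope_def_field, sinh_zero, sub_zero, sub_zero]

/-- `r² (∂_r U)² - sinh² r ((∂_r V)² - V²)` for `U = (sinh r / r) V`, with `dslope sinh 0` (equal to
`sinh r / r` off `0` and to `1` at `0`) making it continuous on all of `ℝ`. -/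
noncomputable def energyCorrection (V : ℝ → ℝ) (r : ℝ) : ℝ :=
  (sinh r ^ 2 + (cosh r - dslope sinh 0 r) ^ 2) * V r ^ 2
    + 2 * sinh r * (cosh r - dslope sinh 0 r) * V r * deriv V r

theorem sq_deriv_sinh_div_mul {V : ℝ → ℝ} {r : ℝ} (hV : DifferentiableAt ℝ V r) (hr : r ≠ 0) :
    deriv (fun ρ => sinh ρ / ρ * V ρ) r ^ 2 * r ^ 2
      = (deriv V r ^ 2 - V r ^ 2) * sinh r ^ 2 + energyCorrection V r := by
  have hU := ((hasDerivAt_sinh r).fun_div (hasDerivAt_id' r) hr).fun_mul hV.hasDerivAt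
  rw [hU.deriv, energyCorrection, dslope_sinh_zero hr]
  field_simp
  ring

theorem hasDerivAt_energyCorrection_primitive {V : ℝ → ℝ} {r : ℝ} (hV : DifferentiableAt ℝ V r)
    (hr : r ≠ 0) :
    HasDerivAt (fun ρ => sinh ρ * (cosh ρ - dslope sinh 0 ρ) * V ρ ^ 2)
      (energyCorrection V r) r := by
  have hq : dslope sinh 0 =ᶠ[𝓝 r] fun ρ => sinh ρ / ρ := by
    filter_upwards [isOpen_ne.mem_nhds hr] with ρ hρ using dslope_sinh_zero hρ
  have h := ((hasDerivAt_sinh r).fun_mul ((hasDerivAt_cosh r).fun_sub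
    ((hasDerivAt_sinh r).fun_div (hasDerivAt_id' r) hr))).fun_mul (hV.hasDerivAt.fun_pow 2)
  refine (h.congr_of_eventuallyEq ?_).congr_deriv ?_
  · filter_upwards [hq] with ρ hρ
    rw [hρ]
  · rw [energyCorrection, dslope_sinh_zero hr]
    field_simp
    ring

theorem integrable_energyCorrection {V : ℝ → ℝ} (hV : ContDiff ℝ 1 V)
    (hVs : HasCompactSupport V) : Integrable (energyCorrection V) := by
  have hc : Continuous (energyCorrection V) := by
    have := hV.continuous_deriv le_rfl
    have := hV.continuous
    have := continuous_dslope_sinh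
    unfold energyCorrection
    fun_prop
  refine hc.integrable_of_hasCompactSupport (hVs.mono (Function.support_subset_iff'.2 ?_))
  intro r hr
  simp [energyCorrection, Function.notMem_support.1 hr]

theorem integral_Ioi_energyCorrection {V : ℝ → ℝ} (hV : ContDiff ℝ 1 V)
    (hVs : HasCompactSupport V) : ∫ r in Ioi (0 : ℝ), energyCorrection V r = 0 := by
  set G := fun ρ => sinh ρ * (cosh ρ - dslope sinh 0 ρ) * V ρ ^ 2
  have hc : Continuous G := by
    have := hV.continuous
    have := continuous_dslope_sinh
    fun_prop
  have hGs : HasCompactSupport G := hVs.mono (Function.support_subset_iff'.2 fun r hr => by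
    simp [G, Function.notMem_support.1 hr])
  rw [integral_Ioi_of_hasDerivAt_of_tendsto hc.continuousWithinAt
    (fun r hr =>
      hasDerivAt_energyCorrection_primitive (hV.differentiable one_ne_zero r) (ne_of_gt hr))
    (integrable_energyCorrection hV hVs).integrableOn
    (hGs.is_zero_at_infty.mono_left atTop_le_cocompact)]
  simp [G]

theorem integral_add_eq_of_integral_eq_zero {α E : Type*} [MeasurableSpace α] {μ : Measure α}
    [NormedAddCommGroup E] [NormedSpace ℝ E] {f g : α → E} (hg : Integrable g μ)
    (hg0 : ∫ x, g x ∂μ = 0) : ∫ x, f x + g x ∂μ = ∫ x, f x ∂μ := by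
  by_cases hf : Integrable f μ
  · rw [integral_add hf hg, hg0, add_zero]
  · rw [integral_undef hf, integral_undef ((integrable_add_iff_integrable_left' hg).not.2 hf)]

theorem integral_energy_sinh_div_mul {V W : ℝ → ℝ} (hV : ContDiff ℝ 1 V)
    (hVs : HasCompactSupport V) :
    ∫ r in Ioi (0 : ℝ), ((1 : ℝ) / 2 * deriv (fun ρ => sinh ρ / ρ * V ρ) r ^ 2
        + (1 : ℝ) / 2 * (sinh r / r * W r) ^ 2
        - r ^ 4 / sinh r ^ 4 / 6 * (sinh r / r * V r) ^ 6) * r ^ 2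
      = ∫ r in Ioi (0 : ℝ), ((1 : ℝ) / 2 * deriv V r ^ 2 - (1 : ℝ) / 2 * V r ^ 2
        + (1 : ℝ) / 2 * W r ^ 2 - (1 : ℝ) / 6 * V r ^ 6) * sinh r ^ 2 := by
  have hpt : ∀ r ∈ Ioi (0 : ℝ),
      ((1 : ℝ) / 2 * deriv (fun ρ => sinh ρ / ρ * V ρ) r ^ 2
        + (1 : ℝ) / 2 * (sinh r / r * W r) ^ 2
        - r ^ 4 / sinh r ^ 4 / 6 * (sinh r / r * V r) ^ 6) * r ^ 2
      = ((1 : ℝ) / 2 * deriv V r ^ 2 - (1 : ℝ) / 2 * V r ^ 2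
        + (1 : ℝ) / 2 * W r ^ 2 - (1 : ℝ) / 6 * V r ^ 6) * sinh r ^ 2
        + 1 / 2 * energyCorrection V r := by
    intro r hr
    have hr0 : r ≠ 0 := ne_of_gt hr
    have hs : sinh r ≠ 0 := sinh_ne_zero.2 hr0
    have hsq := sq_deriv_sinh_div_mul (hV.differentiable one_ne_zero r) hr0
    generalize deriv (fun ρ => sinh ρ / ρ * V ρ) r = D at hsq ⊢
    field_simp
    linear_combination 6 * hsq
  rw [setIntegral_congr_fun measurableSet_Ioi hpt, integral_add_eq_of_integral_eq_zero
    ((integrable_energyCorrection hV hVs).integrableOn.const_mul _)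
    (by rw [integral_const_mul, integral_Ioi_energyCorrection hV hVs, mul_zero])]

/-- if `v(r,t)` is a radial solution of
`∂²_t v - (Δ_{ℍ³} + 1) v = |v|⁴ v`, then `u(r,t) = (sinh r / r) v(r,t)` solves
`∂²_t u - Δ_{ℝ³} u = φ |u|⁴ u` with `φ = r⁴/sinh⁴ r`, and the energies agree:
`∫_{ℍ³} (½|∇v|² - ½|v|² + ½|∂_t v|² - |v|⁶/6) dμ
  = ∫_{ℝ³} (½|∇u|² + ½|∂_t u|² - φ|u|⁶/6) dx`,
written radially with weights `sinh² r` and `r²` respectively. -/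
theorem stmt_19 (I : Set ℝ) (v u : ℝ → ℝ → ℝ)
    (hsmooth : ContDiff ℝ (⊤ : ℕ∞) (fun p : ℝ × ℝ => v p.1 p.2))
    (hsupp : ∀ t, HasCompactSupport (fun r => v r t))
    (hu : ∀ r t, u r t = Real.sinh r / r * v r t)
    -- `v` solves the radial shifted wave equation `∂²_t v = Δ_{ℍ³}v + v + |v|⁴v`:
    (hPDE : ∀ t ∈ I, ∀ r : ℝ, 0 < r →
      deriv (deriv (fun s => v r s)) t
        = deriv (deriv (fun ρ => v ρ t)) r
          + 2 * (Real.cosh r / Real.sinh r) * deriv (fun ρ => v ρ t) r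
          + v r t + |v r t| ^ 4 * v r t) :
    -- `u` solves `∂²_t u = Δ_{ℝ³}u + φ |u|⁴ u` with `φ(r) = r⁴/sinh⁴ r`:
    (∀ t ∈ I, ∀ r : ℝ, 0 < r →
      deriv (deriv (fun s => u r s)) t
        = deriv (deriv (fun ρ => u ρ t)) r + 2 / r * deriv (fun ρ => u ρ t) r
          + r ^ 4 / (Real.sinh r) ^ 4 * |u r t| ^ 4 * u r t) ∧
    -- the energies agree:
    (∀ t ∈ I,
      (∫ r in Ioi (0 : ℝ),
        ((1 : ℝ) / 2 * (deriv (fun ρ => v ρ t) r) ^ 2 - (1 : ℝ) / 2 * (v r t) ^ 2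
          + (1 : ℝ) / 2 * (deriv (fun s => v r s) t) ^ 2
          - (1 : ℝ) / 6 * (v r t) ^ 6) * (Real.sinh r) ^ 2)
      = ∫ r in Ioi (0 : ℝ),
        ((1 : ℝ) / 2 * (deriv (fun ρ => u ρ t) r) ^ 2
          + (1 : ℝ) / 2 * (deriv (fun s => u r s) t) ^ 2
          - r ^ 4 / (Real.sinh r) ^ 4 / 6 * (u r t) ^ 6) * r ^ 2) := by
  have hv : ∀ t, ContDiff ℝ 2 (fun ρ => v ρ t) := fun t =>
    (hsmooth.comp (contDiff_id.prodMk contDiff_const)).of_le (WithTop.coe_le_coe.2 le_top)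
  have hux : ∀ t, (fun ρ => u ρ t) = fun ρ => sinh ρ / ρ * v ρ t := fun t => funext (hu · t)
  have hut : ∀ r, (fun s => u r s) = fun s => sinh r / r * v r s := fun r => funext (hu r)
  refine ⟨fun t ht r hr => ?_, fun t _ => ?_⟩
  · have hs : 0 < sinh r := sinh_pos_iff.2 hr
    rw [hut, deriv_const_mul_field', deriv_const_mul_field, hPDE t ht r hr, hux,
      radialLaplacian_sinh_div_mul (hv t).contDiffAt hr.ne', hu, abs_mul, abs_div,
      abs_of_pos hs, abs_of_pos hr]
    field_simp
  · simp only [hu, deriv_const_mul_field']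
    exact (integral_energy_sinh_div_mul ((hv t).of_le one_le_two) (hsupp t)).symm
end
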